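/- If ρ ≥ 0, ρ_max > 0, r₀ ≥ 0, and Δt ≥ 0, then the explicit logistic update r = ρ (1 + Δt r₀ (1 - ρ/ρ_max)₊) satisfies r ≥ 0; moreover, if additionally ρ < ρ̄ and (1 + r₀Δt) ρ_max < ρ̄, then r < ρ̄. -/
import Mathlib


theorem stmt_11 (ρ ρmax r₀ Δt rbar : ℝ)
    (hρ : 0 ≤ ρ) (hρmax : 0 < ρmax) (hr₀ : 0 ≤ r₀) (hΔt : 0 ≤ Δt) :
    0 ≤ ρ * (1 + Δt * r₀ * max (1 - ρ / ρmax) 0) ∧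
    (ρ < rbar → (1 + r₀ * Δt) * ρmax < rbar →
      ρ * (1 + Δt * r₀ * max (1 - ρ / ρmax) 0) < rbar) := by
  constructor
  · positivity
  · intro h1 h2
    rcases le_or_gt ρmax ρ with h | h
    · have : max (1 - ρ / ρmax) 0 = 0 := by
        apply max_eq_right
        have : 1 ≤ ρ / ρmax := (one_le_div hρmax).mpr h
        linarith
      rw [this]; simpa using h1
    · have hm1 : max (1 - ρ / ρmax) 0 ≤ 1 := by
        apply max_le _ (by norm_num)
        have : 0 ≤ ρ / ρmax := by positivity
        linarith
      have hm0 : 0 ≤ max (1 - ρ / ρmax) 0 := le_max_right _ _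
      nlinarith [mul_nonneg hρ (mul_nonneg (mul_nonneg hΔt hr₀) (sub_nonneg.mpr hm1)), mul_pos (sub_pos.mpr h) (show (0:ℝ) < 1 + r₀*Δt by nlinarith [mul_nonneg hr₀ hΔt])]
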